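/- arXiv:2212.08376 — 3 statements merged into one kernel-verified Lean document; each statement's English description precedes it below -/
import Mathlib

section
/- Under the hypotheses of the smoothing consistency theorem — F_x : ℝ → [0,1] for x ∈ 𝒳 ⊆ ℝ^d, uniformly α-Hölder continuous with constant L > 0 and exponent α ∈ (0,1]; κ a probability density on ℝ with c_{κ,α} = ∫|s|^α κ(s) ds < ∞; positive bandwidths h_n; random estimates F̂_{x;n} with values in [0,1] and sets 𝒳_n ⊆ 𝒳, ε_n > 0 satisfying ℙ( sup_{y ∈ ℝ, x ∈ 𝒳_n} |F̂_{x;n}(y) − F_x(y)| ≥ ε_n ) → 0 (suprema assumed measurable); F̌_{x;n}(y) = ∫ F̂_{x;n}(t) K_{h_n}(y − t) dt — suppose additionally that there is a constant C > 0 with h_n^α ≤ C·ε_n for all n. Then ℙ( sup_{y ∈ ℝ, x ∈ 𝒳_n} |F̌_{x;n}(y) − F_x(y)| ≥ (1 + L·c_{κ,α}·C)·ε_n ) → 0 as n → ∞; i.e., the smoothed estimates converge uniformly at the same rate ε_n as the basic estimates. -/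
open MeasureTheory Filter

/-- STATEMENT 0: Smoothing consistency theorem. If the basic estimates `F̂_{x;n}` are
uniformly consistent on `𝒳_n` at rate `ε_n`, the true conditional CDFs are uniformly
`α`-Hölder with constant `L`, and the kernel `κ` has finite absolute moment `c` of order
`α`, then the smoothed estimates `F̌_{x;n}` are uniformly consistent on `𝒳_n` at rate
`ε_n + L·c·h_n^α`. -/
theorem stmt_7
    {d : ℕ} (hd : 1 ≤ d)
    {Ω : Type*} [MeasurableSpace Ω] (μ : Measure Ω) [IsProbabilityMeasure μ]
    (𝒳 : Set (Fin d → ℝ))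
    (F : (Fin d → ℝ) → ℝ → ℝ)
    (hF01 : ∀ x ∈ 𝒳, ∀ y : ℝ, F x y ∈ Set.Icc (0 : ℝ) 1)
    (L : ℝ) (hL : 0 < L) (α : ℝ) (hα : α ∈ Set.Ioc (0 : ℝ) 1)
    (hHolder : ∀ x ∈ 𝒳, ∀ u v : ℝ, |F x u - F x v| ≤ L * |u - v| ^ α)
    (κ : ℝ → ℝ) (hκ_nonneg : ∀ s, 0 ≤ κ s) (hκ_meas : Measurable κ)
    (hκ_prob : ∫ s, κ s = 1)
    (c : ℝ) (hc : c = ∫ s, |s| ^ α * κ s)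
    (hc_fin : Integrable (fun s => |s| ^ α * κ s))
    (h : ℕ → ℝ) (hh : ∀ n, 0 < h n)
    (Fhat : ℕ → (Fin d → ℝ) → ℝ → Ω → ℝ)
    (hFhat_meas : ∀ n x y, Measurable (fun ω => Fhat n x y ω))
    (hFhat_meas' : ∀ n x ω, Measurable (fun y => Fhat n x y ω))
    (hFhat01 : ∀ n x y ω, Fhat n x y ω ∈ Set.Icc (0 : ℝ) 1)
    (𝒳n : ℕ → Set (Fin d → ℝ)) (h𝒳n : ∀ n, 𝒳n n ⊆ 𝒳)
    (ε : ℕ → ℝ) (hε : ∀ n, 0 < ε n)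
    (hconsist : Tendsto
      (fun n => μ {ω | ε n ≤ ⨆ (x : 𝒳n n) (y : ℝ), |Fhat n x y ω - F x y|})
      atTop (nhds 0))
    (Fcheck : ℕ → (Fin d → ℝ) → ℝ → Ω → ℝ)
    (hFcheck : ∀ n x y ω,
      Fcheck n x y ω = ∫ t, Fhat n x t ω * ((1 / h n) * κ ((y - t) / h n)))
    (C : ℝ) (hC : 0 < C) (hrate : ∀ n, (h n) ^ α ≤ C * ε n) :
    Tendsto
      (fun n => μ {ω | (1 + L * c * C) * ε n ≤
        ⨆ (x : 𝒳n n) (y : ℝ), |Fcheck n x y ω - F x y|})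
      atTop (nhds 0) := by
  obtain ⟨hα0, hα1⟩ := hα
  have hc0 : 0 ≤ c := by
    rw [hc]
    exact integral_nonneg fun s =>
      mul_nonneg (Real.rpow_nonneg (abs_nonneg _) _) (hκ_nonneg s)
  have hκ_int : Integrable κ := by
    by_contra hni
    rw [integral_undef hni] at hκ_prob
    norm_num at hκ_prob
  -- Main pointwise estimate
  have key : ∀ n (x : Fin d → ℝ), x ∈ 𝒳 → ∀ ω (y M : ℝ), 0 ≤ M →
      (∀ t, |Fhat n x t ω - F x t| ≤ M) →
      |Fcheck n x y ω - F x y| ≤ M + L * c * (h n) ^ α := by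
    intro n x hx ω y M hM hMb
    have hn0 : 0 < h n := hh n
    have hn0' : h n ≠ 0 := ne_of_gt hn0
    set K : ℝ → ℝ := fun t => (1 / h n) * κ ((y - t) / h n) with hKdef
    have hK_nonneg : ∀ t, 0 ≤ K t := fun t => mul_nonneg (by positivity) (hκ_nonneg _)
    have hκd_int : Integrable (fun u => κ (u / h n)) := hκ_int.comp_div hn0'
    have hK_int : Integrable K := ((hκd_int.const_mul (1 / h n)).comp_sub_left y)
    have hK_one : ∫ t, K t = 1 := by
      have h1 : ∫ t, (1 / h n) * κ ((y - t) / h n)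
          = ∫ u, (1 / h n) * κ (u / h n) :=
        integral_sub_left_eq_self (fun u => (1 / h n) * κ (u / h n)) volume y
      have h2 : ∫ u, κ (u / h n) = |h n| • ∫ s, κ s :=
        MeasureTheory.Measure.integral_comp_div κ (h n)
      simp only [hKdef, h1, integral_const_mul, h2, hκ_prob, smul_eq_mul,
        abs_of_pos hn0]
      field_simp
    -- moment integral
    set f : ℝ → ℝ := fun s => |s| ^ α * κ s with hfdef
    have hmom_fun : (fun t => |t - y| ^ α * K t)
        = fun t => ((h n) ^ α / h n) * f ((y - t) / h n) := by
      funext t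
      have habs : |t - y| = h n * |(y - t) / h n| := by
        rw [abs_div, abs_of_pos hn0, abs_sub_comm]
        field_simp
      rw [habs, Real.mul_rpow (le_of_lt hn0) (abs_nonneg _)]
      simp only [hfdef, hKdef]
      ring
    have hmom_int : Integrable (fun t => |t - y| ^ α * K t) := by
      rw [hmom_fun]
      exact ((hc_fin.comp_div hn0').comp_sub_left y).const_mul _
    have hmom_val : ∫ t, |t - y| ^ α * K t = (h n) ^ α * c := by
      rw [hmom_fun]
      have h1 : ∫ t, ((h n) ^ α / h n) * f ((y - t) / h n)
          = ∫ u, ((h n) ^ α / h n) * f (u / h n) :=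
        integral_sub_left_eq_self (fun u => ((h n) ^ α / h n) * f (u / h n)) volume y
      have h2 : ∫ u, f (u / h n) = |h n| • ∫ s, f s :=
        MeasureTheory.Measure.integral_comp_div f (h n)
      rw [h1, integral_const_mul, h2, smul_eq_mul, abs_of_pos hn0, ← hc]
      field_simp
    -- Fcheck integrand integrable
    have hFhat_bd : ∀ t, ‖Fhat n x t ω‖ ≤ 1 := by
      intro t
      have := hFhat01 n x t ω
      rw [Real.norm_eq_abs, abs_le]
      exact ⟨by linarith [this.1], this.2⟩
    have hIFK : Integrable (fun t => Fhat n x t ω * K t) :=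
      hK_int.bdd_mul (hFhat_meas' n x ω).aestronglyMeasurable (Filter.Eventually.of_forall hFhat_bd)
    have hsub : ∫ t, (Fhat n x t ω - F x y) * K t = Fcheck n x y ω - F x y := by
      have := integral_sub hIFK (hK_int.const_mul (F x y))
      simp only [sub_mul] at *
      rw [this, integral_const_mul, hK_one, mul_one, hFcheck]
    have hRHS_fun : (fun t => (M + L * |t - y| ^ α) * K t)
        = fun t => M * K t + L * (|t - y| ^ α * K t) := by
      funext t; ring
    have hRHS_int : Integrable (fun t => (M + L * |t - y| ^ α) * K t) := by
      rw [hRHS_fun]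
      exact (hK_int.const_mul M).add (hmom_int.const_mul L)
    have hptw : ∀ t, ‖(Fhat n x t ω - F x y) * K t‖ ≤ (M + L * |t - y| ^ α) * K t := by
      intro t
      rw [norm_mul, Real.norm_eq_abs, Real.norm_eq_abs, abs_of_nonneg (hK_nonneg t)]
      apply mul_le_mul_of_nonneg_right _ (hK_nonneg t)
      calc |Fhat n x t ω - F x y|
          ≤ |Fhat n x t ω - F x t| + |F x t - F x y| := abs_sub_le _ _ _
        _ ≤ M + L * |t - y| ^ α := add_le_add (hMb t) (hHolder x hx t y)
    calc |Fcheck n x y ω - F x y| = |∫ t, (Fhat n x t ω - F x y) * K t| := by rw [hsub]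
      _ ≤ ∫ t, ‖(Fhat n x t ω - F x y) * K t‖ := by
          simpa using norm_integral_le_integral_norm (fun t => (Fhat n x t ω - F x y) * K t)
      _ ≤ ∫ t, (M + L * |t - y| ^ α) * K t := by
          have hnormint : Integrable (fun t => ‖(Fhat n x t ω - F x y) * K t‖) := by
            have := (hIFK.sub (hK_int.const_mul (F x y))).norm
            simpa [Pi.sub_apply, sub_mul] using this
          exact integral_mono hnormint hRHS_int hptw
      _ = M + L * c * (h n) ^ α := by
          rw [hRHS_fun, integral_add (hK_int.const_mul M) (hmom_int.const_mul L),
            integral_const_mul M K, hK_one,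
            integral_const_mul L (fun t => |t - y| ^ α * K t), hmom_val]
          ring
  -- sup comparison
  have hLcC : 0 ≤ L * c * C := by positivity
  have hincl : ∀ n, {ω | (1 + L * c * C) * ε n ≤
      ⨆ (x : 𝒳n n) (y : ℝ), |Fcheck n x y ω - F x y|} ⊆
      {ω | ε n ≤ ⨆ (x : 𝒳n n) (y : ℝ), |Fhat n x y ω - F x y|} := by
    intro n ω hω
    simp only [Set.mem_setOf_eq] at hω ⊢
    by_contra hA
    push_neg at hA
    set A := ⨆ (x : 𝒳n n) (y : ℝ), |Fhat n x y ω - F x y| with hAdef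
    have hA0 : 0 ≤ A := Real.iSup_nonneg fun x => Real.iSup_nonneg fun y => abs_nonneg _
    -- pointwise |Fhat - F| ≤ A
    have hbd1 : ∀ (x : 𝒳n n) (t : ℝ), |Fhat n x t ω - F x t| ≤ 1 := by
      intro x t
      have h1 := hFhat01 n x t ω
      have h2 := hF01 x (h𝒳n n x.2) t
      rw [abs_le]
      constructor <;> [linarith [h1.1, h2.2]; linarith [h1.2, h2.1]]
    have hptA : ∀ (x : 𝒳n n) (t : ℝ), |Fhat n x t ω - F x t| ≤ A := by
      intro x t
      have hb1 : BddAbove (Set.range fun t => |Fhat n x t ω - F x t|) :=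
        ⟨1, by rintro _ ⟨t, rfl⟩; exact hbd1 x t⟩
      refine le_trans (le_ciSup hb1 t) ?_
      refine le_ciSup (f := fun x : 𝒳n n => ⨆ t, |Fhat n x t ω - F x t|) ?_ x
      refine ⟨1, ?_⟩
      rintro _ ⟨x', rfl⟩
      exact Real.iSup_le (fun t => hbd1 x' t) zero_le_one
    -- bound on Fcheck sup
    have hB : (⨆ (x : 𝒳n n) (y : ℝ), |Fcheck n x y ω - F x y|) ≤ A + L * c * C * ε n := by
      have hbnd : 0 ≤ A + L * c * C * ε n := by
        have := hε n; positivity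
      refine Real.iSup_le (fun x => Real.iSup_le (fun y => ?_) hbnd) hbnd
      have hk := key n x (h𝒳n n x.2) ω y A hA0 (hptA x)
      have : L * c * (h n) ^ α ≤ L * c * C * ε n := by
        have := hrate n
        have hLc : 0 ≤ L * c := by positivity
        calc L * c * (h n) ^ α ≤ L * c * (C * ε n) :=
            mul_le_mul_of_nonneg_left (hrate n) hLc
          _ = L * c * C * ε n := by ring
      linarith
    have := lt_of_le_of_lt hB (by nlinarith [hε n] : A + L * c * C * ε n < (1 + L * c * C) * ε n)
    exact absurd hω (not_le.mpr this)
  -- squeeze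
  refine tendsto_of_tendsto_of_tendsto_of_le_of_le tendsto_const_nhds hconsist
    (fun n => zero_le) (fun n => measure_mono (hincl n))
end

section
/- Fix n ≥ 1, strictly increasing real numbers x_1 < ⋯ < x_n, and z_1, …, z_n ∈ [0,1]. Define θ̂ ∈ ℝⁿ by the min-max formula θ̂_j = min_{k ∈ {1,…,j}} max_{l ∈ {j,…,n}} (1/(l−k+1)) ∑_{i=k}^{l} z_i for j = 1, …, n. Then θ̂ satisfies θ̂_1 ≥ θ̂_2 ≥ ⋯ ≥ θ̂_n, and θ̂ minimizes ∑_{i=1}^n (θ_i − z_i)² over the set 𝒞 = { θ ∈ ℝⁿ : θ_i ≥ θ_j whenever x_i ≤ x_j } = { θ ∈ ℝⁿ : θ_1 ≥ ⋯ ≥ θ_n }. -/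
namespace Stmt11

variable (n : ℕ) (w : ℕ → ℝ)

/-- cumulative sum -/
noncomputable def G (m : ℕ) : ℝ := ∑ i ∈ Finset.range m, w i

/-- average of w over [k, l) -/
noncomputable def A (k l : ℕ) : ℝ := (G w l - G w k) / ((l : ℝ) - (k : ℝ))

/-- greedy block endpoint: maximizer of A b l over l ∈ [b+1, n] (if b < n) -/
noncomputable def nxt (b : ℕ) : ℕ :=
  if h : b < n then
    Classical.choose (Finset.exists_max_image (Finset.Icc (b+1) n) (fun l => A w b l)
      ⟨b+1, by simp only [Finset.mem_Icc]; omega⟩)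
  else b + 1

lemma nxt_spec {b : ℕ} (h : b < n) :
    nxt n w b ∈ Finset.Icc (b+1) n ∧ ∀ l ∈ Finset.Icc (b+1) n, A w b l ≤ A w b (nxt n w b) := by
  have := Classical.choose_spec (Finset.exists_max_image (Finset.Icc (b+1) n) (fun l => A w b l)
      ⟨b+1, by simp only [Finset.mem_Icc]; omega⟩)
  rw [nxt, dif_pos h]
  exact this

lemma lt_nxt (b : ℕ) : b < nxt n w b := by
  by_cases h : b < n
  · have := (nxt_spec n w h).1
    rw [Finset.mem_Icc] at this
    omega
  · rw [nxt, dif_neg h]; omega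

lemma nxt_le {b : ℕ} (h : b < n) : nxt n w b ≤ n := by
  have := (nxt_spec n w h).1
  rw [Finset.mem_Icc] at this
  omega

/-- block start function -/
noncomputable def st : ℕ → ℕ
  | 0 => 0
  | (i+1) => if i + 1 < nxt n w (st i) then st i else i + 1

/-- the fitted value -/
noncomputable def g (i : ℕ) : ℝ := A w (st n w i) (nxt n w (st n w i))

lemma st_succ_eq (i : ℕ) :
    st n w (i+1) = if i + 1 < nxt n w (st n w i) then st n w i else i + 1 := rfl

lemma st_le (i : ℕ) : st n w i ≤ i := by
  induction i with
  | zero => simp [st]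
  | succ i ih => rw [st_succ_eq]; split <;> omega

lemma lt_nxt_st (i : ℕ) : i < nxt n w (st n w i) := by
  induction i with
  | zero => simp [st]; exact lt_nxt n w 0
  | succ i ih =>
    rw [st_succ_eq]; split
    · assumption
    · exact lt_nxt n w (i+1)

lemma st_eq_of (i : ℕ) : ∀ m, st n w i ≤ m → m ≤ i → st n w m = st n w i := by
  induction i with
  | zero => intro m h1 h2; obtain rfl : m = 0 := (by omega : m = 0); rfl
  | succ i ih =>
    intro m h1 h2
    rcases Nat.lt_or_ge m (i+1) with hm | hm
    · have hm' : m ≤ i := by omega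
      rw [st_succ_eq] at h1 ⊢
      split at h1
      · next hc => rw [if_pos hc]; exact ih m h1 hm'
      · omega
    · have : m = i + 1 := by omega
      rw [this]

lemma st_eq_of_lt_next (i : ℕ) : ∀ m, st n w i ≤ m → m < nxt n w (st n w i) → st n w m = st n w i := by
  intro m
  induction m with
  | zero =>
    intro h1 h2
    have h0 : st n w i = 0 := by omega
    rw [h0]; rfl
  | succ m ihm =>
    intro h1 h2
    rcases Nat.lt_or_ge i (m+1) with hi | hi
    · -- st i ≤ m case or st i = m+1
      rcases Nat.lt_or_ge m (st n w i) with h3 | h3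
      · -- st i = m+1 ≤ i: contradiction with i < m+1 unless...
        have : st n w i = m + 1 := by omega
        have := st_le n w i
        omega
      · have hm : st n w m = st n w i := ihm h3 (by omega)
        rw [st_succ_eq, hm, if_pos h2]
    · exact st_eq_of n w i (m+1) h1 hi

lemma st_idem (i : ℕ) : st n w (st n w i) = st n w i :=
  st_eq_of n w i _ le_rfl (st_le n w i)

lemma g_block {i m : ℕ} (h1 : st n w i ≤ m) (h2 : m < nxt n w (st n w i)) : g n w m = g n w i := by
  unfold g
  rw [st_eq_of_lt_next n w i m h1 h2]


lemma A_mul {k l : ℕ} (h : k < l) : ((l : ℝ) - k) * A w k l = G w l - G w k := by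
  have hp : (0:ℝ) < (l : ℝ) - k := by
    have : (k:ℝ) < l := by exact_mod_cast h
    linarith
  rw [A, mul_div_cancel₀]
  exact ne_of_gt hp

lemma avg_le {b m : ℕ} (hb : b < n) (h1 : b < m) (h2 : m ≤ n) :
    A w b m ≤ A w b (nxt n w b) :=
  (nxt_spec n w hb).2 m (Finset.mem_Icc.2 ⟨h1, h2⟩)

lemma sum_w_le {b m : ℕ} (hb : b < n) (h1 : b ≤ m) (h2 : m ≤ nxt n w b) :
    G w m - G w b ≤ ((m : ℝ) - b) * A w b (nxt n w b) := by
  rcases Nat.eq_or_lt_of_le h1 with rfl | hlt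
  · simp
  · have h2n : m ≤ n := le_trans h2 (nxt_le n w hb)
    have := avg_le n w hb hlt h2n
    have hmul : ((m:ℝ) - b) * A w b m ≤ ((m:ℝ) - b) * A w b (nxt n w b) := by
      apply mul_le_mul_of_nonneg_left this
      have : (b:ℝ) < m := by exact_mod_cast hlt
      linarith
    rw [A_mul w hlt] at hmul
    exact hmul

lemma sum_w_nxt {b : ℕ} :
    G w (nxt n w b) - G w b = ((nxt n w b : ℝ) - b) * A w b (nxt n w b) :=
  (A_mul w (lt_nxt n w b)).symm

noncomputable def T (m : ℕ) : ℝ := G w m - ∑ i ∈ Finset.range m, g n w i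

lemma sum_g_block {i m : ℕ} (h1 : st n w i ≤ m) (h2 : m ≤ nxt n w (st n w i)) :
    ∑ j ∈ Finset.Ico (st n w i) m, g n w j = ((m : ℝ) - st n w i) * g n w i := by
  have : ∀ j ∈ Finset.Ico (st n w i) m, g n w j = g n w i := by
    intro j hj
    rw [Finset.mem_Ico] at hj
    exact g_block n w hj.1 (lt_of_lt_of_le hj.2 h2)
  rw [Finset.sum_congr rfl this, Finset.sum_const, Nat.card_Ico, nsmul_eq_mul,
    Nat.cast_sub h1]

lemma T_eq (m : ℕ) :
    T n w m = T n w (st n w m) + (G w m - G w (st n w m)) - ((m : ℝ) - st n w m) * g n w m := by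
  unfold T
  have hsplit : ∑ i ∈ Finset.range m, g n w i
      = ∑ i ∈ Finset.range (st n w m), g n w i + ∑ i ∈ Finset.Ico (st n w m) m, g n w i := by
    rw [Finset.range_eq_Ico, Finset.range_eq_Ico]
    exact (Finset.sum_Ico_consecutive (g n w) (Nat.zero_le _) (st_le n w m)).symm
  rw [hsplit, sum_g_block n w (i := m) (m := m) (st_le n w m) (le_of_lt (lt_nxt_st n w m))]
  ring

lemma T_st_zero (i : ℕ) : T n w (st n w i) = 0 := by
  induction i with
  | zero => show T n w 0 = 0; simp [T, G]
  | succ i ih =>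
    rw [st_succ_eq]
    split
    · exact ih
    · next hc =>
      have hnx : nxt n w (st n w i) = i + 1 := by
        have := lt_nxt_st n w i
        omega
      have heq : T n w (i+1) = T n w (st n w (i+1)) + (G w (i+1) - G w (st n w (i+1)))
          - (((i:ℝ)+1) - st n w (i+1)) * g n w (i+1) := by
        have := T_eq n w (i+1)
        push_cast at this ⊢
        convert this using 3
      have hst : st n w (i+1) = st n w i ∨ st n w (i+1) = i + 1 := by
        rw [st_succ_eq]; split; left; rfl; right; rfl
      -- in this branch st (i+1) = i+1, but we can compute directly:
      have h2 : st n w (i+1) = i + 1 := by rw [st_succ_eq, if_neg hc]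
      -- use T_eq at m = i+1 with block start st i: rather compute T(i+1) from T (st i)
      have hsplit : ∑ j ∈ Finset.range (i+1), g n w j
          = ∑ j ∈ Finset.range (st n w i), g n w j + ∑ j ∈ Finset.Ico (st n w i) (i+1), g n w j := by
        rw [Finset.range_eq_Ico, Finset.range_eq_Ico]
        exact (Finset.sum_Ico_consecutive (g n w) (Nat.zero_le _) (le_trans (st_le n w i) (by omega : i ≤ i + 1))).symm
      have hg : g n w i = A w (st n w i) (nxt n w (st n w i)) := rfl
      have hblock : ∑ j ∈ Finset.Ico (st n w i) (i+1), g n w j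
          = (((i:ℝ)+1) - st n w i) * g n w i := by
        have := sum_g_block n w (i := i) (m := i+1) (st_le n w i |>.trans (by omega)) (by omega)
        push_cast at this
        exact this
      have hgi : g n w i = A w (st n w i) (i+1) := by unfold g; rw [hnx]
      have hsum : G w (i+1) - G w (st n w i) = (((i:ℝ)+1) - st n w i) * g n w i := by
        have h0 := sum_w_nxt n w (b := st n w i)
        rw [hnx] at h0
        rw [hgi]
        push_cast at h0 ⊢
        linarith [h0]
      show T n w (i+1) = 0
      unfold T at ih ⊢
      rw [hsplit, hblock]
      rw [← sub_eq_zero] at ih ⊢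
      push_cast at ih ⊢
      linarith [hsum]

lemma T_le {m : ℕ} (hm : m ≤ n) : T n w m ≤ 0 := by
  rcases Nat.eq_or_lt_of_le (st_le n w m) with heq | hlt
  · rw [← heq]
    exact le_of_eq (T_st_zero n w m)
  · have hb : st n w m < n := lt_of_lt_of_le hlt hm
    have hle := sum_w_le n w (b := st n w m) (m := m) hb (st_le n w m) (le_of_lt (lt_nxt_st n w m))
    rw [T_eq n w m, T_st_zero n w m]
    have hg : g n w m = A w (st n w m) (nxt n w (st n w m)) := rfl
    rw [hg]
    linarith

lemma st_nxt_eq (j : ℕ) : st n w (nxt n w (st n w j)) = nxt n w (st n w j) := by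
  set b' := nxt n w (st n w j) with hb'
  have hj : j < b' := lt_nxt_st n w j
  have hb1 : 1 ≤ b' := by omega
  have hpred : st n w (b' - 1) = st n w j :=
    st_eq_of_lt_next n w j (b' - 1) (by have := st_le n w j; omega) (by omega)
  have : b' - 1 + 1 = b' := by omega
  rw [← this, st_succ_eq, hpred, ← hb', this, if_neg (by omega)]

lemma T_nxt_zero (j : ℕ) : T n w (nxt n w (st n w j)) = 0 := by
  have := T_st_zero n w (nxt n w (st n w j))
  rw [st_nxt_eq] at this
  exact this

lemma g_anti {i : ℕ} (h : i + 1 < n) : g n w (i+1) ≤ g n w i := by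
  rcases (by rw [st_succ_eq]; split; exact Or.inl rfl; exact Or.inr rfl :
      st n w (i+1) = st n w i ∨ st n w (i+1) = i + 1) with hs | hs
  · unfold g; rw [hs]
  · have hnc : ¬ (i + 1 < nxt n w (st n w i)) := by
      intro hcon
      rw [st_succ_eq, if_pos hcon] at hs
      have := st_le n w i
      omega
    have hnx : nxt n w (st n w i) = i + 1 := by
      have := lt_nxt_st n w i
      omega
    set b := st n w i with hb
    set b'' := nxt n w (i+1) with hb''
    have hbn : b < n := lt_of_le_of_lt (st_le n w i) (by omega)
    have hbi : b ≤ i := st_le n w i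
    have hb''n : b'' ≤ n := nxt_le n w h
    have hb''i : i + 1 < b'' := lt_nxt n w (i+1)
    have hmax : A w b b'' ≤ A w b (i+1) := by
      have := avg_le n w hbn (m := b'') (by omega) hb''n
      rw [hnx] at this
      exact this
    have hg1 : g n w (i+1) = A w (i+1) b'' := by unfold g; rw [hs]
    have hg2 : g n w i = A w b (i+1) := by unfold g; rw [← hb, hnx]
    rw [hg1, hg2]
    have hp : (0:ℝ) < ((i:ℝ)+1) - b := by
      have : (b:ℝ) ≤ i := by exact_mod_cast hbi
      linarith
    have hq : (0:ℝ) < (b'':ℝ) - ((i:ℝ)+1) := by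
      have : ((i:ℝ)+1) < b'' := by exact_mod_cast hb''i
      linarith
    have e1 : ((i+1:ℕ) : ℝ) = (i:ℝ) + 1 := by push_cast; ring
    have m1 : (((i:ℝ)+1) - b) * A w b (i+1) = G w (i+1) - G w b := by
      have := A_mul w (k := b) (l := i+1) (by omega)
      rw [e1] at this
      exact this
    have m2 : ((b'':ℝ) - ((i:ℝ)+1)) * A w (i+1) b'' = G w b'' - G w (i+1) := by
      have := A_mul w (k := i+1) (l := b'') (by omega)
      rw [e1] at this
      exact this
    have m3 : ((b'':ℝ) - b) * A w b b'' = G w b'' - G w b := by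
      exact A_mul w (k := b) (l := b'') (by omega)
    have hmax' : ((b'':ℝ) - b) * A w b b'' ≤ ((b'':ℝ) - b) * A w b (i+1) :=
      mul_le_mul_of_nonneg_left hmax (by linarith)
    have hmax2 : G w b'' - G w b ≤ ((b'':ℝ) - b) * A w b (i+1) := by
      rw [← m3]; exact hmax'
    have hmax3 : (((i:ℝ)+1) - b) * (G w b'' - G w b)
        ≤ (((i:ℝ)+1) - b) * (((b'':ℝ) - b) * A w b (i+1)) :=
      mul_le_mul_of_nonneg_left hmax2 (le_of_lt hp)
    have m1' : (((i:ℝ)+1) - b) * (((b'':ℝ) - b) * A w b (i+1))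
        = ((b'':ℝ) - b) * (G w (i+1) - G w b) := by rw [← m1]; ring
    rw [m1'] at hmax3
    unfold A
    rw [div_le_div_iff₀ (by rw [e1]; exact hq) (by rw [e1]; exact hp), e1]
    nlinarith [hmax3]

lemma g_mono {i j : ℕ} (hij : i ≤ j) (hj : j < n) : g n w j ≤ g n w i := by
  induction j with
  | zero => have : i = 0 := by omega
            rw [this]
  | succ j ih =>
    rcases Nat.eq_or_lt_of_le hij with rfl | hlt
    · rfl
    · exact le_trans (g_anti n w hj) (ih (by omega) (by omega))


lemma sum_Ico_g {m1 m2 : ℕ} (h : m1 ≤ m2) :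
    ∑ i ∈ Finset.Ico m1 m2, g n w i
      = ∑ i ∈ Finset.range m2, g n w i - ∑ i ∈ Finset.range m1, g n w i :=
  Finset.sum_Ico_eq_sub _ h

lemma upper_bound {j l : ℕ} (hj : j < n) (hjl : j ≤ l) (hl : l < n) :
    A w (st n w j) (l+1) ≤ g n w j := by
  set b := st n w j with hb
  have hbj : b ≤ j := st_le n w j
  have hTb : T n w b = 0 := T_st_zero n w j
  have hTl : T n w (l+1) ≤ 0 := T_le n w (by omega)
  have hnum : G w (l+1) - G w b ≤ ∑ i ∈ Finset.Ico b (l+1), g n w i := by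
    rw [sum_Ico_g n w (by omega)]
    unfold T at hTb hTl
    linarith
  have hgs : ∑ i ∈ Finset.Ico b (l+1), g n w i ≤ (((l:ℝ)+1) - b) * g n w j := by
    have hposcard : ∀ i ∈ Finset.Ico b (l+1), g n w i ≤ g n w j := by
      intro i hi
      rw [Finset.mem_Ico] at hi
      rcases Nat.lt_or_ge i j with hij | hij
      · exact le_of_eq (g_block n w hi.1 (lt_trans hij (lt_nxt_st n w j)))
      · exact g_mono n w hij (by omega)
    calc ∑ i ∈ Finset.Ico b (l+1), g n w i ≤ ∑ _i ∈ Finset.Ico b (l+1), g n w j :=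
          Finset.sum_le_sum hposcard
      _ = (((l:ℝ)+1) - b) * g n w j := by
          rw [Finset.sum_const, Nat.card_Ico, nsmul_eq_mul, Nat.cast_sub (by omega)]
          push_cast
          ring
  have hpos : (0:ℝ) < ((l:ℝ)+1) - b := by
    have : (b:ℝ) ≤ l := by exact_mod_cast (by omega : b ≤ l)
    linarith
  rw [A, div_le_iff₀ (by push_cast; linarith)]
  push_cast
  nlinarith [hnum, hgs]

lemma lower_bound {j k : ℕ} (hj : j < n) (hk : k ≤ j) :
    g n w j ≤ A w k (nxt n w (st n w j)) := by
  set b' := nxt n w (st n w j) with hb'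
  have hjb' : j < b' := lt_nxt_st n w j
  have hb'n : b' ≤ n := by
    have hbn : st n w j < n := lt_of_le_of_lt (st_le n w j) hj
    exact nxt_le n w hbn
  have hTb' : T n w b' = 0 := T_nxt_zero n w j
  have hTk : T n w k ≤ 0 := T_le n w (by omega)
  have hnum : ∑ i ∈ Finset.Ico k b', g n w i ≤ G w b' - G w k := by
    rw [sum_Ico_g n w (by omega)]
    unfold T at hTb' hTk
    linarith
  have hgs : ((b':ℝ) - k) * g n w j ≤ ∑ i ∈ Finset.Ico k b', g n w i := by
    have hge : ∀ i ∈ Finset.Ico k b', g n w j ≤ g n w i := by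
      intro i hi
      rw [Finset.mem_Ico] at hi
      rcases Nat.lt_or_ge i j with hij | hij
      · exact g_mono n w (by omega) hj
      · rcases Nat.eq_or_lt_of_le hij with rfl | hij'
        · exact le_rfl
        · exact ge_of_eq (g_block n w (le_trans (st_le n w j) (by omega)) hi.2)
    calc ((b':ℝ) - k) * g n w j = ∑ _i ∈ Finset.Ico k b', g n w j := by
          rw [Finset.sum_const, Nat.card_Ico, nsmul_eq_mul, Nat.cast_sub (by omega)]
      _ ≤ ∑ i ∈ Finset.Ico k b', g n w i := Finset.sum_le_sum hge
  have hpos : (0:ℝ) < (b':ℝ) - k := by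
    have : (k:ℝ) < b' := by exact_mod_cast (by omega : k < b')
    linarith
  rw [A, le_div_iff₀ hpos]
  nlinarith [hnum, hgs]

lemma T_n_zero : T n w n = 0 := by
  have h1 := lt_nxt_st n w n
  have h2 : st n w n = n := by
    by_contra hne
    have hlt : st n w n < n := lt_of_le_of_ne (st_le n w n) hne
    have := nxt_le n w hlt
    omega
  have := T_st_zero n w n
  rw [h2] at this
  exact this

lemma inner_nonpos (φ : ℕ → ℝ) (hφ : ∀ i, i + 1 < n → φ (i+1) ≤ φ i) :
    ∑ i ∈ Finset.range n, φ i * (w i - g n w i) ≤ 0 := by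
  have habel := Finset.sum_range_by_parts φ (fun i => w i - g n w i) n
  simp only [smul_eq_mul] at habel
  have htot : ∑ i ∈ Finset.range n, (w i - g n w i) = T n w n := by
    unfold T G
    rw [Finset.sum_sub_distrib]
  rw [habel, htot, T_n_zero, mul_zero, zero_sub, neg_nonpos]
  apply Finset.sum_nonneg
  intro i hi
  rw [Finset.mem_range] at hi
  have hT : ∑ j ∈ Finset.range (i+1), (w j - g n w j) = T n w (i+1) := by
    unfold T G
    rw [Finset.sum_sub_distrib]
  rw [hT]
  have h1 : φ (i+1) - φ i ≤ 0 := by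
    have := hφ i (by omega)
    linarith
  have h2 : T n w (i+1) ≤ 0 := T_le n w (by omega)
  nlinarith [h1, h2]

lemma inner_g_zero : ∑ i ∈ Finset.range n, g n w i * (w i - g n w i) = 0 := by
  have habel := Finset.sum_range_by_parts (g n w) (fun i => w i - g n w i) n
  simp only [smul_eq_mul] at habel
  have htot : ∑ i ∈ Finset.range n, (w i - g n w i) = T n w n := by
    unfold T G
    rw [Finset.sum_sub_distrib]
  rw [habel, htot, T_n_zero, mul_zero, zero_sub, neg_eq_zero]
  apply Finset.sum_eq_zero
  intro i hi
  have hT : ∑ j ∈ Finset.range (i+1), (w j - g n w j) = T n w (i+1) := by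
    unfold T G
    rw [Finset.sum_sub_distrib]
  rw [hT]
  rcases (by rw [st_succ_eq]; split; exact Or.inl rfl; exact Or.inr rfl :
      st n w (i+1) = st n w i ∨ st n w (i+1) = i + 1) with hs | hs
  · have : g n w (i+1) = g n w i := by unfold g; rw [hs]
    rw [this, sub_self, zero_mul]
  · have : T n w (i+1) = 0 := by
      have := T_st_zero n w (i+1)
      rw [hs] at this
      exact this
    rw [this, mul_zero]

end Stmt11


open Stmt11 in
/-- For strictly increasing covariates `x_1 < ⋯ < x_n`, the min-max
(pool-adjacent-violators) formula
`θ̂_j = min_{k ≤ j} max_{l ≥ j} (∑_{i=k}^{l} z_i)/(l − k + 1)` yields a nonincreasing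
vector that minimizes `∑ (θ_i − z_i)²` over the antitonic constraint set
`𝒞 = {θ : θ_i ≥ θ_j whenever x_i ≤ x_j} = {θ : θ_1 ≥ ⋯ ≥ θ_n}`. -/
theorem stmt_11
    (n : ℕ) (hn : 1 ≤ n) (x : Fin n → ℝ) (hx : StrictMono x)
    (z : Fin n → ℝ) (hz : ∀ i, z i ∈ Set.Icc (0 : ℝ) 1)
    (θhat : Fin n → ℝ)
    (hθhat : ∀ j : Fin n,
      θhat j = (Finset.Iic j).inf' ⟨j, Finset.mem_Iic.2 le_rfl⟩ (fun k =>
        (Finset.Ici j).sup' ⟨j, Finset.mem_Ici.2 le_rfl⟩ (fun l =>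
          (∑ i ∈ Finset.Icc k l, z i) / ((Finset.Icc k l).card : ℝ)))) :
    (∀ i j : Fin n, i ≤ j → θhat j ≤ θhat i) ∧
    ({θ : Fin n → ℝ | ∀ i j, x i ≤ x j → θ j ≤ θ i}
      = {θ : Fin n → ℝ | ∀ i j, i ≤ j → θ j ≤ θ i}) ∧
    (θhat ∈ {θ : Fin n → ℝ | ∀ i j, x i ≤ x j → θ j ≤ θ i} ∧
      ∀ η ∈ {θ : Fin n → ℝ | ∀ i j, x i ≤ x j → θ j ≤ θ i},
        ∑ i, (θhat i - z i) ^ 2 ≤ ∑ i, (η i - z i) ^ 2) := by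
  classical
  set w : ℕ → ℝ := fun i => if h : i < n then z ⟨i, h⟩ else 0 with hw
  have hwz : ∀ i : Fin n, w ↑i = z i := by
    intro i
    simp only [hw, dif_pos i.isLt]
  have hratio : ∀ k l : Fin n, k ≤ l →
      (∑ i ∈ Finset.Icc k l, z i) / ((Finset.Icc k l).card : ℝ) = A w ↑k (↑l + 1) := by
    intro k l hkl
    have hkl' : (↑k : ℕ) ≤ ↑l := hkl
    have hsum : ∑ i ∈ Finset.Icc k l, z i = G w (↑l + 1) - G w ↑k := by
      have h1 : ∑ i ∈ Finset.Icc k l, z i = ∑ i ∈ Finset.Icc (↑k : ℕ) ↑l, w i := by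
        rw [← Fin.map_valEmbedding_Icc, Finset.sum_map]
        exact Finset.sum_congr rfl (fun i _ => (hwz i).symm)
      rw [h1, ← Finset.Ico_add_one_right_eq_Icc]
      exact Finset.sum_Ico_eq_sub _ (by omega)
    have hcard : ((Finset.Icc k l).card : ℝ) = ((↑l : ℕ) : ℝ) + 1 - ((↑k : ℕ) : ℝ) := by
      rw [Fin.card_Icc, Nat.cast_sub (by omega)]
      push_cast
      ring
    rw [hsum, hcard, A]
    push_cast
    ring_nf
  have hθg : ∀ j : Fin n, θhat j = g n w ↑j := by
    intro j
    rw [hθhat j]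
    apply le_antisymm
    · have hbj : st n w ↑j < n := lt_of_le_of_lt (st_le n w ↑j) j.isLt
      have hmem : (⟨st n w ↑j, hbj⟩ : Fin n) ∈ Finset.Iic j :=
        Finset.mem_Iic.2 (by
          show st n w ↑j ≤ (↑j : ℕ)
          exact st_le n w ↑j)
      refine le_trans (Finset.inf'_le _ hmem) (Finset.sup'_le _ _ ?_)
      intro l hl
      rw [Finset.mem_Ici] at hl
      have hl' : (↑j : ℕ) ≤ ↑l := hl
      rw [hratio ⟨st n w ↑j, hbj⟩ l (by
        show st n w ↑j ≤ (↑l : ℕ)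
        have := st_le n w ↑j
        omega)]
      exact upper_bound n w j.isLt hl' l.isLt
    · apply Finset.le_inf'
      intro k hk
      rw [Finset.mem_Iic] at hk
      have hk' : (↑k : ℕ) ≤ ↑j := hk
      have hjb' : (↑j : ℕ) < nxt n w (st n w ↑j) := lt_nxt_st n w ↑j
      have hb'n : nxt n w (st n w ↑j) ≤ n :=
        nxt_le n w (lt_of_le_of_lt (st_le n w ↑j) j.isLt)
      have hlval : nxt n w (st n w ↑j) - 1 < n := by omega
      have hlmem : (⟨nxt n w (st n w ↑j) - 1, hlval⟩ : Fin n) ∈ Finset.Ici j :=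
        Finset.mem_Ici.2 (by
          show (↑j : ℕ) ≤ nxt n w (st n w ↑j) - 1
          omega)
      refine le_trans ?_ (Finset.le_sup' _ hlmem)
      rw [hratio k ⟨nxt n w (st n w ↑j) - 1, hlval⟩ (by
        show (↑k : ℕ) ≤ nxt n w (st n w ↑j) - 1
        omega)]
      have hcast : ((⟨nxt n w (st n w ↑j) - 1, hlval⟩ : Fin n) : ℕ) + 1
          = nxt n w (st n w ↑j) := by
        show nxt n w (st n w ↑j) - 1 + 1 = _
        omega
      rw [hcast]
      exact lower_bound n w j.isLt hk'
  have hanti : ∀ i j : Fin n, i ≤ j → θhat j ≤ θhat i := by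
    intro i j hij
    rw [hθg i, hθg j]
    exact g_mono n w (show (↑i : ℕ) ≤ ↑j from hij) j.isLt
  refine ⟨hanti, ?_, ?_, ?_⟩
  · ext θ
    simp only [Set.mem_setOf_eq]
    constructor
    · intro h i j hij
      exact h i j (hx.monotone hij)
    · intro h i j hxij
      exact h i j ((hx.le_iff_le).mp hxij)
  · intro i j hxij
    exact hanti i j ((hx.le_iff_le).mp hxij)
  · intro η hη
    simp only [Set.mem_setOf_eq] at hη
    have hη' : ∀ i j : Fin n, i ≤ j → η j ≤ η i := fun i j h => hη i j (hx.monotone h)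
    set φ : ℕ → ℝ := fun i => if h : i < n then η ⟨i, h⟩ else 0 with hφdef
    have hφz : ∀ i : Fin n, φ ↑i = η i := by
      intro i
      simp only [hφdef, dif_pos i.isLt]
    have hφ : ∀ i, i + 1 < n → φ (i+1) ≤ φ i := by
      intro i hi
      have h1 : i < n := by omega
      simp only [hφdef, dif_pos hi, dif_pos h1]
      exact hη' ⟨i, h1⟩ ⟨i+1, hi⟩ (by show i ≤ i + 1; omega)
    have hsum1 : ∑ i : Fin n, (θhat i - z i) ^ 2
        = ∑ i ∈ Finset.range n, (g n w i - w i) ^ 2 := by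
      rw [← Fin.sum_univ_eq_sum_range (fun i => (g n w i - w i) ^ 2) n]
      exact Finset.sum_congr rfl (fun i _ => by rw [hθg i, hwz i])
    have hsum2 : ∑ i : Fin n, (η i - z i) ^ 2
        = ∑ i ∈ Finset.range n, (φ i - w i) ^ 2 := by
      rw [← Fin.sum_univ_eq_sum_range (fun i => (φ i - w i) ^ 2) n]
      exact Finset.sum_congr rfl (fun i _ => by rw [hφz i, hwz i])
    rw [hsum1, hsum2]
    have h1 := inner_nonpos n w φ hφ
    have h2 := inner_g_zero n w
    have h3 : ∑ i ∈ Finset.range n, (φ i - g n w i) * (w i - g n w i) ≤ 0 := by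
      have he : ∀ i ∈ Finset.range n, (φ i - g n w i) * (w i - g n w i)
          = φ i * (w i - g n w i) - g n w i * (w i - g n w i) := fun i _ => by ring
      rw [Finset.sum_congr rfl he, Finset.sum_sub_distrib, h2]
      linarith
    have hexp : ∀ i ∈ Finset.range n, (φ i - w i) ^ 2
        = ((φ i - g n w i) ^ 2 + (g n w i - w i) ^ 2)
          - 2 * ((φ i - g n w i) * (w i - g n w i)) := fun i _ => by ring
    rw [Finset.sum_congr rfl hexp, Finset.sum_sub_distrib, Finset.sum_add_distrib,
      ← Finset.mul_sum]
    have h4 : (0:ℝ) ≤ ∑ i ∈ Finset.range n, (φ i - g n w i) ^ 2 :=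
      Finset.sum_nonneg (fun i _ => sq_nonneg _)
    linarith
end

section
/- Fix n ≥ 1 and real numbers x_1, …, x_n and y_1, …, y_n. For each threshold y ∈ ℝ, let θ̂(y) ∈ ℝⁿ be the minimizer of ∑_{i=1}^n (θ_i − 𝟙{y_i ≤ y})² over 𝒞 = { θ ∈ ℝⁿ : θ_i ≥ θ_j whenever x_i ≤ x_j }. Then for each i, the map y ↦ θ̂(y)_i is nondecreasing in y; i.e., the componentwise solutions across thresholds are pointwise nondecreasing, as required for them to define CDFs. -/
/-- The isotonic distributional regression solutions across thresholds are
componentwise nondecreasing in the threshold: if `θ` minimizes the least-squares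
criterion with targets `𝟙{y_i ≤ t}` and `θ'` with targets `𝟙{y_i ≤ t'}` where `t ≤ t'`,
both over `𝒞 = {θ : θ_i ≥ θ_j whenever x_i ≤ x_j}`, then `θ_i ≤ θ'_i` for every `i`. -/
theorem stmt_18
    (n : ℕ) (hn : 1 ≤ n) (x : Fin n → ℝ) (y : Fin n → ℝ)
    (t t' : ℝ) (htt' : t ≤ t')
    (θ θ' : Fin n → ℝ)
    (hθ_mem : ∀ i j, x i ≤ x j → θ j ≤ θ i)
    (hθ_min : ∀ η : Fin n → ℝ, (∀ i j, x i ≤ x j → η j ≤ η i) →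
      ∑ i, (θ i - (if y i ≤ t then (1 : ℝ) else 0)) ^ 2
        ≤ ∑ i, (η i - (if y i ≤ t then (1 : ℝ) else 0)) ^ 2)
    (hθ'_mem : ∀ i j, x i ≤ x j → θ' j ≤ θ' i)
    (hθ'_min : ∀ η : Fin n → ℝ, (∀ i j, x i ≤ x j → η j ≤ η i) →
      ∑ i, (θ' i - (if y i ≤ t' then (1 : ℝ) else 0)) ^ 2
        ≤ ∑ i, (η i - (if y i ≤ t' then (1 : ℝ) else 0)) ^ 2) :
    ∀ i, θ i ≤ θ' i := by
  set a : Fin n → ℝ := fun i => if y i ≤ t then (1 : ℝ) else 0 with ha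
  set b : Fin n → ℝ := fun i => if y i ≤ t' then (1 : ℝ) else 0 with hb
  have hab : ∀ i, a i ≤ b i := by
    intro i
    simp only [ha, hb]
    split_ifs with h1 h2
    · exact le_refl 1
    · exact absurd (h1.trans htt') h2
    · norm_num
    · exact le_refl 0
  set m : Fin n → ℝ := fun i => min (θ i) (θ' i) with hm
  set M : Fin n → ℝ := fun i => max (θ i) (θ' i) with hM
  have hm_mem : ∀ i j, x i ≤ x j → m j ≤ m i := fun i j h =>
    min_le_min (hθ_mem i j h) (hθ'_mem i j h)
  have hM_mem : ∀ i j, x i ≤ x j → M j ≤ M i := fun i j h =>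
    max_le_max (hθ_mem i j h) (hθ'_mem i j h)
  have hpt : ∀ i, (m i - a i) ^ 2 + (M i - b i) ^ 2
      ≤ (θ i - a i) ^ 2 + (θ' i - b i) ^ 2 := by
    intro i
    rcases le_total (θ i) (θ' i) with h | h
    · simp [hm, hM, min_eq_left h, max_eq_right h]
    · have := hab i
      simp only [hm, hM, min_eq_right h, max_eq_left h]
      nlinarith
  have h1 := hθ_min m hm_mem
  have h2 := hθ'_min M hM_mem
  have h3 : ∑ i, (m i - a i) ^ 2 + ∑ i, (M i - b i) ^ 2
      ≤ ∑ i, (θ i - a i) ^ 2 + ∑ i, (θ' i - b i) ^ 2 := by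
    rw [← Finset.sum_add_distrib, ← Finset.sum_add_distrib]
    exact Finset.sum_le_sum fun i _ => hpt i
  have hm_eq : ∑ i, (m i - a i) ^ 2 = ∑ i, (θ i - a i) ^ 2 :=
    le_antisymm (by linarith) h1
  set c : Fin n → ℝ := fun i => (θ i + m i) / 2 with hc
  have hc_mem : ∀ i j, x i ≤ x j → c j ≤ c i := by
    intro i j h
    have := hθ_mem i j h
    have := hm_mem i j h
    simp only [hc]
    linarith
  have hc_val : ∑ i, (c i - a i) ^ 2
      = ∑ i, (θ i - a i) ^ 2 - (∑ i, (θ i - m i) ^ 2) / 4 := by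
    have : ∀ i : Fin n, (c i - a i) ^ 2
        = (θ i - a i) ^ 2 / 2 + (m i - a i) ^ 2 / 2 - (θ i - m i) ^ 2 / 4 := by
      intro i; simp only [hc]; ring
    rw [Finset.sum_congr rfl fun i _ => this i]
    rw [Finset.sum_sub_distrib, Finset.sum_add_distrib, ← Finset.sum_div,
      ← Finset.sum_div, ← Finset.sum_div, hm_eq]
    ring
  have h4 := hθ_min c hc_mem
  rw [hc_val] at h4
  have h5 : ∑ i, (θ i - m i) ^ 2 ≤ 0 := by linarith
  have h6 : ∀ i ∈ Finset.univ, (θ i - m i) ^ 2 = 0 := by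
    rw [← Finset.sum_eq_zero_iff_of_nonneg fun i _ => sq_nonneg (θ i - m i)]
    exact le_antisymm h5 (Finset.sum_nonneg fun i _ => sq_nonneg _)
  intro i
  have := h6 i (Finset.mem_univ i)
  have hθm : θ i = m i := by
    have := sq_eq_zero_iff.mp this
    linarith
  rw [hθm]
  exact min_le_right _ _
end
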